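/- arXiv:2205.01047 — 4 statements merged into one kernel-verified Lean document; each statement's English description precedes it below -/
import Mathlib

section
/- For every σ > 0 there exists a real number K₁ = K₁(σ) > 2 with the following property: for all real α ≠ β with |α| ≥ σ, |β| ≥ σ, |α + β| ≥ σ, every K ≥ K₁, every r > 0, and every pair (c, c') ∈ ℝ² with (c, c') ≠ (0, 0), setting I(ρ) := ∫_ρ^{Kρ} (c s^α + c' s^β)² s^{−1} ds, one has I(K²r) − 2·I(Kr) + I(r) > 0. -/
/-!
Writing `I` as a combination of the integrals `∫_ρ^{Kρ} s^(γ-1) ds = ρ^γ (K^γ - 1) / γ`, the second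
difference is the quadratic form `T(2α) x² + 2 T(α+β) x y + T(2β) y²` in `x = c r^α`, `y = c' r^β`,
with `T(γ) = (K^γ - 1)³ / γ > 0`; so it suffices that `T(α+β)² < T(2α) T(2β)`.
Since `K^γ - 1 = 2 e^{γL/2} sinh(γL/2)` with `L = log K`, the exponential factors cancel and this
becomes `h((a+b)/2)² < h(a) h(b)` for the even function `h(x) = sinh³ x / x`, `a = αL`, `b = βL`.
Because `sinh x / x` more than doubles over any step of length `6`, `h` is strictly midpoint
log-convex on `[6, ∞)`, which settles the case where `a` and `b` have the same sign; when they
have opposite signs, `h((|a| - |b|)/2) < h((|a| + |b|)/2)` reduces it to the first case.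
-/

open MeasureTheory intervalIntegral Real

lemma sinh_lt_mul_cosh {x : ℝ} (hx : 0 < x) : sinh x < x * cosh x := by
  obtain ⟨ξ, ⟨hξ0, hξx⟩, hξ⟩ := exists_hasDerivAt_eq_slope sinh cosh hx
    continuous_sinh.continuousOn (fun y _ => hasDerivAt_sinh y)
  rw [sinh_zero, sub_zero, sub_zero, eq_div_iff hx.ne'] at hξ
  rw [← hξ, mul_comm]
  exact mul_lt_mul_of_pos_left (cosh_lt_cosh.2 (by rwa [abs_of_pos hξ0, abs_of_pos hx])) hx

lemma two_mul_le_sinh {t : ℝ} (ht : 6 ≤ t) : 2 * t ≤ sinh t := by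
  have h₁ := quadratic_le_exp_of_nonneg (by linarith : (0 : ℝ) ≤ t)
  have h₂ : exp (-t) ≤ 1 := exp_le_one_iff.2 (by linarith)
  rw [sinh_eq]
  nlinarith

lemma two_mul_add_mul_sinh_lt {d t : ℝ} (hd : 0 < d) (ht : 6 ≤ t) :
    2 * (d + t) * sinh d < d * sinh (d + t) := by
  have hsd : 0 < sinh d := sinh_pos_iff.2 hd
  have hst := two_mul_le_sinh ht
  have hct : 2 ≤ cosh t := by linarith [sinh_lt_cosh t]
  have hcd := sinh_lt_mul_cosh hd
  rw [sinh_add]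
  nlinarith [mul_le_mul_of_nonneg_left hct (mul_pos hd hsd).le,
    mul_lt_mul_of_pos_right hcd (by linarith : 0 < sinh t),
    mul_le_mul_of_nonneg_left hst hsd.le]

noncomputable def sinhCubeDiv (x : ℝ) : ℝ := sinh x ^ 3 / x

lemma sinhCubeDiv_neg (x : ℝ) : sinhCubeDiv (-x) = sinhCubeDiv x := by
  rw [sinhCubeDiv, sinhCubeDiv, sinh_neg, Odd.neg_pow (by decide), neg_div_neg_eq]

lemma sinhCubeDiv_pos {x : ℝ} (hx : x ≠ 0) : 0 < sinhCubeDiv x := by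
  wlog hx0 : 0 < x generalizing x
  · rw [← sinhCubeDiv_neg]
    exact this (neg_ne_zero.2 hx) (by linarith [hx.lt_or_gt.resolve_right hx0])
  have := sinh_pos_iff.2 hx0
  unfold sinhCubeDiv
  positivity

lemma sinhCubeDiv_lt_add {d t : ℝ} (hd : 0 < d) (ht : 6 ≤ t) :
    sinhCubeDiv d < sinhCubeDiv (d + t) := by
  have hsd : 0 < sinh d := sinh_pos_iff.2 hd
  have hsdt : sinh d < sinh (d + t) := sinh_lt_sinh.2 (by linarith)
  have key := two_mul_add_mul_sinh_lt hd ht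
  rw [sinhCubeDiv, sinhCubeDiv, div_lt_div_iff₀ hd (by linarith)]
  calc sinh d ^ 3 * (d + t) = sinh d ^ 2 * ((d + t) * sinh d) := by ring
    _ < sinh (d + t) ^ 2 * (d * sinh (d + t)) :=
      mul_lt_mul'' (pow_lt_pow_left₀ hsdt hsd.le two_ne_zero)
        (by linarith [mul_pos (by linarith : (0 : ℝ) < d + t) hsd]) (by positivity) (by positivity)
    _ = sinh (d + t) ^ 3 * d := by ring

lemma sinh_sub_mul_sinh_add (m d : ℝ) :
    sinh (m - d) * sinh (m + d) = sinh m ^ 2 - sinh d ^ 2 := by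
  rw [sinh_sub, sinh_add]
  linear_combination sinh m ^ 2 * cosh_sq d - sinh d ^ 2 * cosh_sq m

lemma sinhCubeDiv_sq_lt_mul {d t : ℝ} (hd : 0 < d) (ht : 6 ≤ t) :
    sinhCubeDiv (t + d) ^ 2 < sinhCubeDiv t * sinhCubeDiv (t + 2 * d) := by
  set m := t + d
  have hm : 0 < m := by positivity
  have hP : 0 < sinh d := sinh_pos_iff.2 hd
  have hS : sinh d < sinh m := sinh_lt_sinh.2 (by linarith)
  have key : 2 * m * sinh d < d * sinh m := by
    simpa [m, add_comm] using two_mul_add_mul_sinh_lt hd ht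
  have hprod : sinh t * sinh (t + 2 * d) = sinh m ^ 2 - sinh d ^ 2 := by
    rw [← sinh_sub_mul_sinh_add, show m - d = t by ring, show m + d = t + 2 * d by ring]
  rw [sinhCubeDiv, sinhCubeDiv, sinhCubeDiv, div_pow, div_mul_div_comm, ← mul_pow, hprod,
    div_lt_div_iff₀ (by positivity) (by positivity), show t * (t + 2 * d) = m ^ 2 - d ^ 2 by ring]
  set S := sinh m
  set P := sinh d
  have hgap : 0 < S ^ 4 * (d ^ 2 * S ^ 2 - 3 * m ^ 2 * P ^ 2) := by
    have := pow_lt_pow_left₀ key (by positivity) two_ne_zero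
    exact mul_pos (by positivity) (by nlinarith [mul_pos hm hP])
  have hrest : 0 ≤ m ^ 2 * P ^ 4 * (3 * S ^ 2 - P ^ 2) :=
    mul_nonneg (by positivity) (by nlinarith)
  linarith [show m ^ 2 * (S ^ 2 - P ^ 2) ^ 3 - (m ^ 2 - d ^ 2) * (S ^ 3) ^ 2 =
    S ^ 4 * (d ^ 2 * S ^ 2 - 3 * m ^ 2 * P ^ 2) + m ^ 2 * P ^ 4 * (3 * S ^ 2 - P ^ 2) by ring]

lemma sinhCubeDiv_midpoint_sq_lt {x y : ℝ} (hx : 6 ≤ x) (hy : 6 ≤ y) (hxy : x ≠ y) :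
    sinhCubeDiv ((x + y) / 2) ^ 2 < sinhCubeDiv x * sinhCubeDiv y := by
  wlog h : x < y generalizing x y
  · rw [add_comm, mul_comm]
    exact this hy hx hxy.symm (lt_of_le_of_ne (not_lt.1 h) hxy.symm)
  have := sinhCubeDiv_sq_lt_mul (d := (y - x) / 2) (by linarith) hx
  rwa [show x + (y - x) / 2 = (x + y) / 2 by ring, show x + 2 * ((y - x) / 2) = y by ring] at this

lemma sinhCubeDiv_half_sub_sq_lt {x y : ℝ} (hx : 6 ≤ x) (hy : 6 ≤ y) (hxy : x ≠ y) :
    sinhCubeDiv ((x - y) / 2) ^ 2 < sinhCubeDiv x * sinhCubeDiv y := by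
  wlog h : y < x generalizing x y
  · rw [mul_comm, ← sinhCubeDiv_neg, show -((x - y) / 2) = (y - x) / 2 by ring]
    exact this hy hx hxy.symm (lt_of_le_of_ne (not_lt.1 h) hxy)
  have hd : 0 < (x - y) / 2 := by linarith
  have hlt := sinhCubeDiv_lt_add hd hy
  rw [show (x - y) / 2 + y = (x + y) / 2 by ring] at hlt
  calc sinhCubeDiv ((x - y) / 2) ^ 2 < sinhCubeDiv ((x + y) / 2) ^ 2 :=
        pow_lt_pow_left₀ hlt (sinhCubeDiv_pos hd.ne').le two_ne_zero
    _ < sinhCubeDiv x * sinhCubeDiv y := sinhCubeDiv_midpoint_sq_lt hx hy hxy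

lemma sinhCubeDiv_half_add_sq_lt {a b : ℝ} (ha : 6 ≤ |a|) (hb : 6 ≤ |b|) (hab : a ≠ b)
    (hab₀ : a + b ≠ 0) : sinhCubeDiv ((a + b) / 2) ^ 2 < sinhCubeDiv a * sinhCubeDiv b := by
  wlog ha₀ : 0 ≤ a generalizing a b
  · have := this (a := -a) (b := -b) (by rwa [abs_neg]) (by rwa [abs_neg]) (neg_injective.ne hab)
      (by rwa [← neg_add, neg_ne_zero]) (by linarith)
    rwa [← neg_add, neg_div, sinhCubeDiv_neg, sinhCubeDiv_neg, sinhCubeDiv_neg] at this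
  rw [abs_of_nonneg ha₀] at ha
  rcases le_or_gt 0 b with hb₀ | hb₀
  · rw [abs_of_nonneg hb₀] at hb
    exact sinhCubeDiv_midpoint_sq_lt ha hb hab
  · rw [abs_of_neg hb₀] at hb
    have := sinhCubeDiv_half_sub_sq_lt ha hb (fun h => hab₀ (by linarith))
    rwa [sub_neg_eq_add, sinhCubeDiv_neg] at this

lemma exp_two_mul_sub_one (x : ℝ) : exp (2 * x) - 1 = exp x * (2 * sinh x) := by
  have h : exp x * exp (-x) = 1 := by rw [← exp_add, add_neg_cancel, exp_zero]
  rw [sinh_eq, two_mul, exp_add]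
  linear_combination h

lemma rpow_sub_one_pow_three_div_eq {K : ℝ} (hK : 0 < K) (γ : ℝ) :
    (K ^ γ - 1) ^ 3 / γ =
      exp (3 * (γ * log K / 2)) * (4 * log K) * sinhCubeDiv (γ * log K / 2) := by
  rcases eq_or_ne γ 0 with rfl | hγ
  · simp [sinhCubeDiv]
  rcases eq_or_ne (log K) 0 with hL | hL
  · simp [rpow_def_of_pos hK, hL]
  rw [rpow_def_of_pos hK, show log K * γ = 2 * (γ * log K / 2) by ring, exp_two_mul_sub_one,
    sinhCubeDiv, mul_pow, mul_pow, ← exp_nat_mul]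
  field_simp
  push_cast
  ring_nf

lemma rpow_sub_one_pow_three_div_pos {K γ : ℝ} (hK : 1 < K) (hγ : γ ≠ 0) :
    0 < (K ^ γ - 1) ^ 3 / γ := by
  have hL : 0 < log K := log_pos hK
  rw [rpow_sub_one_pow_three_div_eq (by linarith) γ]
  exact mul_pos (by positivity) (sinhCubeDiv_pos (by positivity))

lemma rpow_sub_one_pow_three_div_sq_lt {K α β : ℝ} (hK : 1 < K) (hα : 6 ≤ |α| * log K)
    (hβ : 6 ≤ |β| * log K) (hαβ : α ≠ β) (hαβ₀ : α + β ≠ 0) :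
    ((K ^ (α + β) - 1) ^ 3 / (α + β)) ^ 2 <
      (K ^ (2 * α) - 1) ^ 3 / (2 * α) * ((K ^ (2 * β) - 1) ^ 3 / (2 * β)) := by
  have hL : 0 < log K := log_pos hK
  have hcore := sinhCubeDiv_half_add_sq_lt (a := α * log K) (b := β * log K)
    (by rwa [abs_mul, abs_of_pos hL]) (by rwa [abs_mul, abs_of_pos hL])
    (fun h => hαβ (mul_right_cancel₀ hL.ne' h)) (by rw [← add_mul]; exact mul_ne_zero hαβ₀ hL.ne')
  simp only [rpow_sub_one_pow_three_div_eq (by linarith : 0 < K)]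
  rw [show 2 * α * log K / 2 = α * log K by ring, show 2 * β * log K / 2 = β * log K by ring,
    show (α + β) * log K / 2 = (α * log K + β * log K) / 2 by ring]
  set a := α * log K
  set b := β * log K
  have hexp : exp (3 * ((a + b) / 2)) ^ 2 = exp (3 * a) * exp (3 * b) := by
    rw [sq, ← exp_add, ← exp_add]; ring_nf
  calc _ = exp (3 * a) * exp (3 * b) * (4 * log K) ^ 2 * sinhCubeDiv ((a + b) / 2) ^ 2 := by
        rw [← hexp]; ring
    _ < exp (3 * a) * exp (3 * b) * (4 * log K) ^ 2 * (sinhCubeDiv a * sinhCubeDiv b) :=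
        mul_lt_mul_of_pos_left hcore (by positivity)
    _ = _ := by ring

lemma quadratic_form_pos {a b c x y : ℝ} (ha : 0 < a) (hdisc : b ^ 2 < a * c)
    (hxy : (x, y) ≠ (0, 0)) : 0 < a * x ^ 2 + 2 * b * x * y + c * y ^ 2 := by
  refine (mul_pos_iff_of_pos_left ha).1 ?_
  rw [show a * (a * x ^ 2 + 2 * b * x * y + c * y ^ 2) =
    (a * x + b * y) ^ 2 + (a * c - b ^ 2) * y ^ 2 by ring]
  rcases eq_or_ne y 0 with rfl | hy
  · have hx : x ≠ 0 := fun hx => hxy (by rw [hx])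
    have : a * x ≠ 0 := mul_ne_zero ha.ne' hx
    simp only [mul_zero, add_zero, zero_pow two_ne_zero]
    positivity
  · have : 0 < (a * c - b ^ 2) * y ^ 2 := mul_pos (by linarith) (by positivity)
    positivity

lemma integral_rpow_sub_one {K ρ γ : ℝ} (hK : 0 < K) (hρ : 0 < ρ) (hγ : γ ≠ 0) :
    ∫ s in ρ..K * ρ, s ^ (γ - 1) = ρ ^ γ * ((K ^ γ - 1) / γ) := by
  have h0 : (0 : ℝ) ∉ Set.uIcc ρ (K * ρ) := by
    rw [Set.mem_uIcc]; rintro (⟨h, -⟩ | ⟨h, -⟩) <;> linarith [mul_pos hK hρ]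
  rw [integral_rpow (Or.inr ⟨by contrapose! hγ; linarith, h0⟩), sub_add_cancel,
    mul_rpow hK.le hρ.le]
  ring

lemma sq_mul_inv_eq {s : ℝ} (hs : 0 < s) (c c' α β : ℝ) :
    (c * s ^ α + c' * s ^ β) ^ 2 * s⁻¹ =
      c ^ 2 * s ^ (2 * α - 1) + 2 * c * c' * s ^ (α + β - 1) + c' ^ 2 * s ^ (2 * β - 1) := by
  simp only [rpow_sub_one hs.ne', show 2 * α = α + α by ring, show 2 * β = β + β by ring,
    rpow_add hs]
  ring

lemma integral_sq_mul_inv {K ρ : ℝ} (hK : 0 < K) (hρ : 0 < ρ) (c c' : ℝ) {α β : ℝ}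
    (hα : α ≠ 0) (hβ : β ≠ 0) (hαβ : α + β ≠ 0) :
    ∫ s in ρ..K * ρ, (c * s ^ α + c' * s ^ β) ^ 2 * s⁻¹ =
      c ^ 2 * (ρ ^ (2 * α) * ((K ^ (2 * α) - 1) / (2 * α)))
        + 2 * c * c' * (ρ ^ (α + β) * ((K ^ (α + β) - 1) / (α + β)))
        + c' ^ 2 * (ρ ^ (2 * β) * ((K ^ (2 * β) - 1) / (2 * β))) := by
  have hpos : ∀ s ∈ Set.uIcc ρ (K * ρ), 0 < s := by
    intro s hs
    rw [Set.mem_uIcc] at hs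
    rcases hs with ⟨h, -⟩ | ⟨h, -⟩ <;> linarith [mul_pos hK hρ]
  have hint : ∀ γ : ℝ, IntervalIntegrable (fun s : ℝ => s ^ γ) volume ρ (K * ρ) := fun γ =>
    (continuousOn_id.rpow_const fun s hs => Or.inl (hpos s hs).ne').intervalIntegrable
  rw [integral_congr fun s hs => sq_mul_inv_eq (hpos s hs) c c' α β,
    integral_add (((hint _).const_mul _).add ((hint _).const_mul _)) ((hint _).const_mul _),
    integral_add ((hint _).const_mul _) ((hint _).const_mul _),
    intervalIntegral.integral_const_mul, intervalIntegral.integral_const_mul,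
    intervalIntegral.integral_const_mul,
    integral_rpow_sub_one hK hρ (mul_ne_zero two_ne_zero hα), integral_rpow_sub_one hK hρ hαβ,
    integral_rpow_sub_one hK hρ (mul_ne_zero two_ne_zero hβ)]

lemma integral_sq_mul_inv_second_diff {K r : ℝ} (hK : 0 < K) (hr : 0 < r) (c c' : ℝ) {α β : ℝ}
    (hα : α ≠ 0) (hβ : β ≠ 0) (hαβ : α + β ≠ 0) :
    let I := fun ρ => ∫ s in ρ..K * ρ, (c * s ^ α + c' * s ^ β) ^ 2 * s⁻¹
    I (K ^ 2 * r) - 2 * I (K * r) + I r =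
      (K ^ (2 * α) - 1) ^ 3 / (2 * α) * (c * r ^ α) ^ 2
        + 2 * ((K ^ (α + β) - 1) ^ 3 / (α + β)) * (c * r ^ α) * (c' * r ^ β)
        + (K ^ (2 * β) - 1) ^ 3 / (2 * β) * (c' * r ^ β) ^ 2 := by
  intro I
  simp only [I]
  rw [integral_sq_mul_inv hK (by positivity) c c' hα hβ hαβ,
    integral_sq_mul_inv hK (by positivity) c c' hα hβ hαβ, integral_sq_mul_inv hK hr c c' hα hβ hαβ]
  simp (disch := positivity) only [mul_rpow, ← rpow_pow_comm hK.le,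
    show 2 * α = α + α by ring, show 2 * β = β + β by ring, rpow_add hr, rpow_add hK]
  ring

theorem stmt_2 (σ : ℝ) (hσ : 0 < σ) :
    ∃ K₁ : ℝ, 2 < K₁ ∧
      ∀ α β : ℝ, α ≠ β → σ ≤ |α| → σ ≤ |β| → σ ≤ |α + β| →
        ∀ K : ℝ, K₁ ≤ K → ∀ r : ℝ, 0 < r →
          ∀ c c' : ℝ, (c, c') ≠ (0, 0) →
            (fun I : ℝ → ℝ =>
              I (K ^ 2 * r) - 2 * I (K * r) + I r > 0)
              (fun ρ => ∫ s in ρ..(K * ρ), (c * s ^ α + c' * s ^ β) ^ 2 * s⁻¹) := by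
  refine ⟨exp (6 / σ) + 2, by linarith [exp_pos (6 / σ)], ?_⟩
  intro α β hαβ hα hβ hαβ₀ K hK r hr c c' hcc
  have hK₁ : 1 < K := by linarith [exp_pos (6 / σ)]
  have hlogK : 0 < log K := log_pos hK₁
  have hL : 6 ≤ σ * log K := by
    rw [← div_le_iff₀' hσ, le_log_iff_exp_le (by linarith)]
    linarith
  have large : ∀ {γ : ℝ}, σ ≤ |γ| → 6 ≤ |γ| * log K := fun h =>
    hL.trans (mul_le_mul_of_nonneg_right h hlogK.le)
  have ne_zero : ∀ {γ : ℝ}, σ ≤ |γ| → γ ≠ 0 := fun h h₀ => by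
    rw [h₀, abs_zero] at h; linarith
  have hxy : (c * r ^ α, c' * r ^ β) ≠ (0, 0) := by
    contrapose! hcc
    simp only [Prod.mk.injEq, mul_eq_zero, (rpow_pos_of_pos hr _).ne', or_false] at hcc ⊢
    exact hcc
  show _ > 0
  rw [integral_sq_mul_inv_second_diff (by linarith) hr c c' (ne_zero hα) (ne_zero hβ)
    (ne_zero hαβ₀)]
  exact quadratic_form_pos
    (rpow_sub_one_pow_three_div_pos hK₁ (mul_ne_zero two_ne_zero (ne_zero hα)))
    (rpow_sub_one_pow_three_div_sq_lt hK₁ (large hα) (large hβ) hαβ (ne_zero hαβ₀)) hxy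
end

section
/- For every σ > 0 there exists a real number K₂ = K₂(σ) > 2 with the following property: for all real α' with |α'| ≥ σ, every K ≥ K₂, every r > 0, and every (c, c') ∈ ℝ² with (c, c') ≠ (0, 0), setting Ĩ(ρ) := ∫_ρ^{Kρ} (c s^{α'} + c' s^{α'} log s)² s^{−1} ds, one has Ĩ(K²r) − 2·Ĩ(Kr) + Ĩ(r) > 0. -/
/-!
In the variable `u = log s` the integral `Ĩ(ρ)` becomes `∫_{log ρ}^{log ρ + L} e^{au} (c + c'u)² du`
with `a = 2α'` and `L = log K`, so the second difference is the integral over one period of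
`e^{au} ((T - 1)(c + c'u) + 2Tc'L)² - 2T (c'L)² e^{au}`, where `T = e^{aL}`. The linear
function inside the square has slope `(T - 1)c'`, hence stays at distance `|T - 1||c'| L / 4`
from zero on the first or on the last quarter of the period. With `t = e^{aL/4}` the quarters
carry the masses `E, tE, t²E, t³E`, and the resulting lower bound beats the subtracted term as
soon as `t ≥ 128` or `t ≤ 1/128`, which `|α'| log K ≥ 14` guarantees.
-/

open MeasureTheory intervalIntegral Real Set

theorem integral_rpow_log_sq_eq {α c c' ρ R : ℝ} (hρ : 0 < ρ) (hR : 0 < R) :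
    ∫ s in ρ..R, (c * s ^ α + c' * s ^ α * log s) ^ 2 * s⁻¹ =
      ∫ u in log ρ..log R, exp (2 * α * u) * (c + c' * u) ^ 2 := by
  have hg : ContinuousOn (fun s : ℝ => (c * s ^ α + c' * s ^ α * log s) ^ 2 * s⁻¹) (Ioi 0) := by
    intro s hs
    have hs0 : s ≠ 0 := ne_of_gt hs
    have := continuousAt_rpow_const s α (Or.inl hs0)
    have := continuousAt_log hs0
    have := continuousAt_inv₀ hs0
    apply ContinuousAt.continuousWithinAt
    fun_prop
  have := integral_comp_mul_deriv' (a := log ρ) (b := log R) (fun u _ => hasDerivAt_exp u)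
    continuousOn_exp (hg.mono (image_subset_iff.2 fun u _ => exp_pos u))
  rw [exp_log hρ, exp_log hR] at this
  rw [← this]
  refine integral_congr fun u _ => ?_
  simp only [Function.comp_apply, rpow_def_of_pos (exp_pos u), log_exp]
  rw [inv_mul_cancel_right₀ (exp_pos u).ne', show 2 * α * u = u * α + u * α by ring, exp_add]
  ring

theorem integral_second_difference {f : ℝ → ℝ} (hf : Continuous f) (x L : ℝ) :
    (∫ u in x + 2 * L..x + 2 * L + L, f u) - 2 * (∫ u in x + L..x + L + L, f u)
        + ∫ u in x..x + L, f u =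
      ∫ u in x..x + L, (f (u + 2 * L) - 2 * f (u + L) + f u) := by
  have hi : ∀ d, IntervalIntegrable (fun u => f (u + d)) volume x (x + L) := fun d =>
    (hf.comp (continuous_add_const d)).intervalIntegrable _ _
  rw [integral_add (((hi _).sub ((hi _).const_mul 2))) (hf.intervalIntegrable _ _),
    integral_sub (hi _) ((hi _).const_mul 2), intervalIntegral.integral_const_mul,
    integral_comp_add_right, integral_comp_add_right]
  ring_nf

-- `c + c' (u + L)` is the mean of `c + c' u` and `c + c' (u + 2L)`, which turns the second
-- difference into a single square minus a constant.
theorem exp_mul_sq_second_difference (a c c' L u : ℝ) :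
    exp (a * (u + 2 * L)) * (c + c' * (u + 2 * L)) ^ 2
        - 2 * (exp (a * (u + L)) * (c + c' * (u + L)) ^ 2) + exp (a * u) * (c + c' * u) ^ 2 =
      exp (a * u) * (((exp (a * L) - 1) * c + 2 * exp (a * L) * (c' * L))
          + (exp (a * L) - 1) * c' * u) ^ 2
        - 2 * exp (a * L) * (c' * L) ^ 2 * exp (a * u) := by
  rw [show a * (u + 2 * L) = a * u + a * L + a * L by ring, show a * (u + L) = a * u + a * L by ring,
    exp_add, exp_add]
  ring

theorem mul_sq_le_add_mul_sq {q m d h : ℝ} (hh : 0 ≤ h) (hd : h ≤ |d|) (hqd : 0 ≤ m * q * d) :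
    (m * h) ^ 2 ≤ (q + m * d) ^ 2 := by
  have hd2 : h ^ 2 ≤ d ^ 2 := by simpa only [sq_abs] using pow_le_pow_left₀ hh hd 2
  nlinarith [mul_le_mul_of_nonneg_left hd2 (sq_nonneg m), sq_nonneg q]

theorem le_integral_mul_sq_linear {w : ℝ → ℝ} {x L : ℝ} (hL : 0 ≤ L)
    (hw : ∀ u ∈ Icc x (x + L), 0 ≤ w u) (hwi : IntervalIntegrable w volume x (x + L)) (p m : ℝ) :
    (m * (L / 4)) ^ 2 * min (∫ u in x..x + L / 4, w u) (∫ u in x + 3 * L / 4..x + L, w u) ≤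
      ∫ u in x..x + L, w u * (p + m * u) ^ 2 := by
  have hint : IntervalIntegrable (fun u => w u * (p + m * u) ^ 2) volume x (x + L) :=
    hwi.mul_continuousOn (by fun_prop)
  have hnn : 0 ≤ᵐ[volume.restrict (Ioc x (x + L))] fun u => w u * (p + m * u) ^ 2 :=
    ae_restrict_of_forall_mem measurableSet_Ioc fun u hu =>
      mul_nonneg (hw u (Ioc_subset_Icc_self hu)) (sq_nonneg _)
  have on_subinterval : ∀ y z, x ≤ y → y ≤ z → z ≤ x + L →
      (∀ u ∈ Icc y z, (m * (L / 4)) ^ 2 ≤ (p + m * u) ^ 2) →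
      (m * (L / 4)) ^ 2 * ∫ u in y..z, w u ≤ ∫ u in x..x + L, w u * (p + m * u) ^ 2 := by
    intro y z hxy hyz hzx hQ
    have hsub : Icc y z ⊆ Icc x (x + L) := Icc_subset_Icc hxy hzx
    have hwi' : IntervalIntegrable w volume y z := hwi.mono_set (by
      rw [uIcc_of_le hyz, uIcc_of_le (hxy.trans (hyz.trans hzx))]; exact hsub)
    calc (m * (L / 4)) ^ 2 * ∫ u in y..z, w u = ∫ u in y..z, (m * (L / 4)) ^ 2 * w u :=
          (intervalIntegral.integral_const_mul _ _).symm
      _ ≤ ∫ u in y..z, w u * (p + m * u) ^ 2 :=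
          integral_mono_on hyz (hwi'.const_mul _) (hint.mono_set (by
            rw [uIcc_of_le hyz, uIcc_of_le (hxy.trans (hyz.trans hzx))]; exact hsub))
            fun u hu => by rw [mul_comm]; exact mul_le_mul_of_nonneg_left (hQ u hu) (hw u (hsub hu))
      _ ≤ _ := integral_mono_interval hxy hyz hzx hnn hint
  -- With `q` the value at the midpoint, `p + m u` stays at distance `≥ |m| L / 4` from zero on
  -- the right quarter if `m q ≥ 0` and on the left quarter if `m q ≤ 0`.
  set q := p + m * (x + L / 2)
  have hQ : ∀ u, p + m * u = q + m * (u - (x + L / 2)) := fun u => by ring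
  rcases le_total 0 (m * q) with h | h
  · refine (mul_le_mul_of_nonneg_left (min_le_right _ _) (sq_nonneg _)).trans
      (on_subinterval _ _ (by linarith) (by linarith) le_rfl fun u hu => ?_)
    have hd : L / 4 ≤ u - (x + L / 2) := by linarith [hu.1]
    rw [hQ]
    exact mul_sq_le_add_mul_sq (by positivity) (hd.trans (le_abs_self _))
      (mul_nonneg h (hd.trans' (by positivity)))
  · refine (mul_le_mul_of_nonneg_left (min_le_left _ _) (sq_nonneg _)).trans
      (on_subinterval _ _ le_rfl (by linarith) (by linarith) fun u hu => ?_)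
    have hd : L / 4 ≤ -(u - (x + L / 2)) := by linarith [hu.2]
    rw [hQ]
    exact mul_sq_le_add_mul_sq (by positivity) (hd.trans (neg_le_abs _))
      (mul_nonneg_of_nonpos_of_nonpos h (by linarith))

theorem integral_exp_mul {a : ℝ} (ha : a ≠ 0) (y z : ℝ) :
    ∫ u in y..z, exp (a * u) = (exp (a * z) - exp (a * y)) / a := by
  rw [integral_comp_mul_left (fun u => exp u) ha, integral_exp, smul_eq_mul, inv_mul_eq_div]

theorem le_exp_or_exp_le_of_seven_le_abs {s : ℝ} (hs : 7 ≤ |s|) :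
    128 ≤ exp s ∨ exp s ≤ 1 / 128 := by
  have h7 : (128 : ℝ) ≤ exp 7 := by
    have := pow_le_pow_left₀ zero_le_two (by linarith [add_one_le_exp 1] : (2 : ℝ) ≤ exp 1) 7
    rw [exp_one_pow] at this
    norm_num at this
    exact this
  rcases le_abs'.1 hs with hs | hs
  · right
    calc exp s ≤ exp (-7) := exp_le_exp.2 hs
      _ = (exp 7)⁻¹ := exp_neg 7
      _ ≤ 1 / 128 := by rw [one_div]; exact inv_anti₀ (by norm_num) h7
  · exact Or.inl (h7.trans (exp_le_exp.2 hs))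

theorem lt_pow_four_sub_one_sq_mul_min {t : ℝ} (h0 : 0 < t) (ht : 128 ≤ t ∨ t ≤ 1 / 128) :
    32 * t ^ 4 * (1 + t + t ^ 2 + t ^ 3) < (t ^ 4 - 1) ^ 2 * min 1 (t ^ 3) := by
  rcases ht with ht | ht
  · rw [min_eq_left (one_le_pow₀ (by linarith))]
    nlinarith [pow_pos h0 3, pow_pos h0 4, pow_pos h0 5, pow_pos h0 6, pow_pos h0 7]
  · rw [min_eq_right (pow_le_one₀ h0.le (by linarith))]
    nlinarith [pow_pos h0 3, pow_pos h0 4, pow_pos h0 5, pow_pos h0 6, pow_pos h0 7]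

theorem integral_exp_mul_quarters {a : ℝ} (ha : a ≠ 0) (x L : ℝ) :
    (∫ u in x..x + L, exp (a * u)) =
        (1 + exp (a * (L / 4)) + exp (a * (L / 4)) ^ 2 + exp (a * (L / 4)) ^ 3) *
          ∫ u in x..x + L / 4, exp (a * u) ∧
      ∫ u in x + 3 * L / 4..x + L, exp (a * u) =
        exp (a * (L / 4)) ^ 3 * ∫ u in x..x + L / 4, exp (a * u) := by
  have hshift : ∀ k : ℕ, exp (a * (x + k * (L / 4))) = exp (a * x) * exp (a * (L / 4)) ^ k :=
    fun k => by rw [← exp_nat_mul, ← exp_add]; ring_nf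
  have h1 := hshift 1
  have h3 := hshift 3
  have h4 := hshift 4
  push_cast at h1 h3 h4
  simp only [integral_exp_mul ha]
  rw [show x + L = x + 4 * (L / 4) by ring, h4, show x + 3 * L / 4 = x + 3 * (L / 4) by ring, h3,
    show x + L / 4 = x + 1 * (L / 4) by ring, h1]
  constructor <;> ring

theorem second_difference_integral_exp_mul_sq_eq (a c c' L x : ℝ) :
    (∫ u in x + 2 * L..x + 2 * L + L, exp (a * u) * (c + c' * u) ^ 2)
        - 2 * (∫ u in x + L..x + L + L, exp (a * u) * (c + c' * u) ^ 2)
        + ∫ u in x..x + L, exp (a * u) * (c + c' * u) ^ 2 =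
      (∫ u in x..x + L, exp (a * u) * (((exp (a * L) - 1) * c + 2 * exp (a * L) * (c' * L))
          + (exp (a * L) - 1) * c' * u) ^ 2)
        - 2 * exp (a * L) * (c' * L) ^ 2 * ∫ u in x..x + L, exp (a * u) := by
  have hexp : Continuous fun u => exp (a * u) := by fun_prop
  rw [integral_second_difference (by fun_prop)]
  simp only [exp_mul_sq_second_difference]
  rw [integral_sub ((hexp.intervalIntegrable _ _).mul_continuousOn (by fun_prop))
    ((hexp.intervalIntegrable _ _).const_mul _), intervalIntegral.integral_const_mul]

theorem second_difference_integral_exp_mul_sq_pos {a L : ℝ} (haL : 28 ≤ |a| * L) {c c' : ℝ}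
    (hcc' : (c, c') ≠ (0, 0)) (x : ℝ) :
    0 < (∫ u in x + 2 * L..x + 2 * L + L, exp (a * u) * (c + c' * u) ^ 2)
        - 2 * (∫ u in x + L..x + L + L, exp (a * u) * (c + c' * u) ^ 2)
        + ∫ u in x..x + L, exp (a * u) * (c + c' * u) ^ 2 := by
  have hL : 0 < L := pos_of_mul_pos_right (by linarith) (abs_nonneg a)
  have ha : a ≠ 0 := by rintro rfl; norm_num at haL
  obtain ⟨hW, hWR⟩ := integral_exp_mul_quarters ha x L
  set t := exp (a * (L / 4)) with ht
  have ht0 : 0 < t := exp_pos _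
  have hT : exp (a * L) = t ^ 4 := by rw [ht, ← exp_nat_mul]; ring_nf
  have ht_far : 128 ≤ t ∨ t ≤ 1 / 128 := le_exp_or_exp_le_of_seven_le_abs (by
    rw [abs_mul, abs_of_pos (by positivity : (0 : ℝ) < L / 4)]; linarith)
  have hT1 : t ^ 4 - 1 ≠ 0 := by
    rcases ht_far with h | h
    · nlinarith [one_le_pow₀ (by linarith : (1 : ℝ) ≤ t) (n := 3)]
    · nlinarith [pow_le_one₀ ht0.le (by linarith : t ≤ 1) (n := 3)]
  have hexp : Continuous fun u => exp (a * u) := by fun_prop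
  rw [second_difference_integral_exp_mul_sq_eq, hT, sub_pos]
  set p := (t ^ 4 - 1) * c + 2 * t ^ 4 * (c' * L)
  set m := (t ^ 4 - 1) * c'
  rcases eq_or_ne c' 0 with hc' | hc'
  · have hc : c ≠ 0 := fun hc => hcc' (by rw [hc, hc'])
    have hpm : ∀ u, p + m * u = (t ^ 4 - 1) * c := fun u => by simp only [p, m, hc']; ring
    simp only [hpm, hc', zero_mul, zero_pow two_ne_zero, mul_zero]
    exact intervalIntegral_pos_of_pos_on ((hexp.intervalIntegrable _ _).mul_const _)
      (fun u _ => mul_pos (exp_pos _) (sq_pos_of_ne_zero (mul_ne_zero hT1 hc))) (by linarith)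
  set E := ∫ u in x..x + L / 4, exp (a * u)
  have hE : 0 < E := intervalIntegral_pos_of_pos_on (hexp.intervalIntegrable _ _)
    (fun u _ => exp_pos _) (by linarith)
  have hquarter := le_integral_mul_sq_linear (x := x) hL.le (fun u _ => (exp_pos (a * u)).le)
    (hexp.intervalIntegrable _ _) p m
  rw [hWR] at hquarter
  calc 2 * t ^ 4 * (c' * L) ^ 2 * ∫ u in x..x + L, exp (a * u)
      = c' ^ 2 * L ^ 2 * E / 16 * (32 * t ^ 4 * (1 + t + t ^ 2 + t ^ 3)) := by rw [hW]; ring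
    _ < c' ^ 2 * L ^ 2 * E / 16 * ((t ^ 4 - 1) ^ 2 * min 1 (t ^ 3)) :=
        mul_lt_mul_of_pos_left (lt_pow_four_sub_one_sq_mul_min ht0 ht_far) (by positivity)
    _ = (m * (L / 4)) ^ 2 * min E (t ^ 3 * E) := by
        rw [show min E (t ^ 3 * E) = E * min 1 (t ^ 3) by
          rw [mul_min_of_nonneg _ _ hE.le, mul_one, mul_comm]]
        ring
    _ ≤ _ := hquarter

theorem stmt_3 (σ : ℝ) (hσ : 0 < σ) :
    ∃ K₂ : ℝ, 2 < K₂ ∧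
      ∀ α' : ℝ, σ ≤ |α'| →
        ∀ K : ℝ, K₂ ≤ K → ∀ r : ℝ, 0 < r →
          ∀ c c' : ℝ, (c, c') ≠ (0, 0) →
            (fun I : ℝ → ℝ =>
              I (K ^ 2 * r) - 2 * I (K * r) + I r > 0)
              (fun ρ => ∫ s in ρ..(K * ρ),
                (c * s ^ α' + c' * s ^ α' * Real.log s) ^ 2 * s⁻¹) := by
  refine ⟨max 3 (exp (14 / σ)), lt_max_of_lt_left (by norm_num),
    fun α' hα K hK r hr c c' hcc' => ?_⟩
  have hKexp : exp (14 / σ) ≤ K := (le_max_right _ _).trans hK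
  have hK0 : 0 < K := (exp_pos _).trans_le hKexp
  have hlogK : 14 / σ ≤ log K := (le_log_iff_exp_le hK0).2 hKexp
  have haL : 28 ≤ |2 * α'| * log K := by
    rw [abs_mul, abs_two]
    calc (28 : ℝ) = 2 * σ * (14 / σ) := by field_simp; norm_num
      _ ≤ 2 * |α'| * log K := by gcongr
  have hI : ∀ ρ, 0 < ρ → ∫ s in ρ..K * ρ, (c * s ^ α' + c' * s ^ α' * log s) ^ 2 * s⁻¹ =
      ∫ u in log ρ..log ρ + log K, exp (2 * α' * u) * (c + c' * u) ^ 2 := fun ρ hρ => by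
    rw [integral_rpow_log_sq_eq hρ (by positivity), log_mul hK0.ne' hρ.ne', add_comm (log K)]
  have hlog : log (K ^ 2 * r) = log r + 2 * log K := by
    rw [log_mul (by positivity) hr.ne', log_pow]; push_cast; ring
  beta_reduce
  rw [hI _ (by positivity), hI _ (by positivity), hI _ hr, hlog, log_mul hK0.ne' hr.ne',
    add_comm (log K)]
  exact second_difference_integral_exp_mul_sq_pos haL hcc' (log r)
end

section
/- Let Z ⊂ ℝⁿ be a compact subset and f : Z → ℝⁿ a Lipschitz map. Call x ∈ Z a critical point of f if there exists a proper linear subspace T_x ⊊ ℝⁿ such that for every sequence of points x_j ∈ Z with x_j ≠ x and x_j → x, if (f(x_j) − f(x))/|x_j − x| converges to some v ∈ ℝⁿ, then v ∈ T_x. Let Crit_f denote the set of critical points of f. Then the n-dimensional Hausdorff measure of f(Crit_f) is zero. -/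
/-!
Near a critical point `x` with exceptional subspace `T`, the normalized increments
`‖y - x‖⁻¹ • (f y - f x)` are bounded by the Lipschitz constant `L`, and all their sequential
limits lie in `T`; by compactness they eventually lie in an arbitrarily thin neighbourhood of the
null set `T ∩ closedBall 0 L`. Since that neighbourhood is balanced, `f` maps `Z ∩ closedBall x r`
into a translate of its `r`-dilate, whose measure is at most `ε μ (closedBall x r)` for small `r`.
A Besicovitch covering of a bounded piece `C` of the critical set by such balls then gives
`μ (f '' C) ≤ ε (μ C + 1)` for every `ε > 0`.
-/

open MeasureTheory Filter Metric Set Module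
open scoped Topology ENNReal NNReal Pointwise

theorem eq_zero_of_forall_pos_le_mul {a c : ℝ≥0∞} (hc : c ≠ ∞) (h : ∀ ε > 0, a ≤ ε * c) :
    a = 0 := by
  have hlim : Tendsto (fun ε => ε * c) (𝓝[>] 0) (𝓝 0) := by
    have hid : Tendsto id (𝓝[>] (0 : ℝ≥0∞)) (𝓝 0) := tendsto_id.mono_left nhdsWithin_le_nhds
    simpa using ENNReal.Tendsto.mul_const hid (Or.inr hc)
  exact nonpos_iff_eq_zero.1 (ge_of_tendsto hlim (eventually_nhdsWithin_of_forall h))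

theorem Balanced.thickening {𝕜 E : Type*} [NormedField 𝕜] [SeminormedAddCommGroup E]
    [NormedSpace 𝕜 E] {s : Set E} (hs : Balanced 𝕜 s) (δ : ℝ) :
    Balanced 𝕜 (thickening δ s) := by
  rw [← add_ball_zero]
  exact hs.add balanced_ball_zero

theorem Submodule.balanced {𝕜 E : Type*} [NormedField 𝕜] [AddCommGroup E] [Module 𝕜 E]
    (T : Submodule 𝕜 E) : Balanced 𝕜 (T : Set E) := by
  rintro a - _ ⟨y, hy, rfl⟩
  exact T.smul_mem a hy

section Besicovitch

variable {α β : Type*} [MetricSpace α] [SecondCountableTopology α] [MeasurableSpace α]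
  [OpensMeasurableSpace α] [HasBesicovitchCovering α] [MeasurableSpace β]

theorem measure_image_le_mul_of_forall_closedBall (μ : Measure α) [SFinite μ] [μ.OuterRegular]
    (ν : Measure β) (f : α → β) {s : Set α} {ε : ℝ≥0∞}
    (h : ∀ x ∈ s, ∃ δ > 0, ∀ r ∈ Ioo 0 δ, ν (f '' (s ∩ closedBall x r)) ≤ ε * μ (closedBall x r)) :
    ν (f '' s) ≤ ε * (μ s + 1) := by
  choose! δ hδ hball using h
  obtain ⟨t, r, ht, hts, hr, hcover, hsum⟩ :=
    Besicovitch.exists_closedBall_covering_tsum_measure_le μ one_ne_zero (fun x => Ioo 0 (δ x)) s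
      fun x hx θ hθ => by simpa [Ioo_inter_Ioo] using lt_min (hδ x hx) hθ
  have himage : f '' s ⊆ ⋃ x ∈ t, f '' (s ∩ closedBall x (r x)) := by
    rintro - ⟨y, hy, rfl⟩
    obtain ⟨x, hxt, hyx⟩ := mem_iUnion₂.1 (hcover hy)
    exact mem_biUnion hxt (mem_image_of_mem f ⟨hy, hyx⟩)
  calc ν (f '' s) ≤ ∑' x : t, ν (f '' (s ∩ closedBall x (r x))) :=
        (measure_mono himage).trans (measure_biUnion_le ν ht _)
    _ ≤ ∑' x : t, ε * μ (closedBall x (r x)) :=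
        ENNReal.tsum_le_tsum fun x => hball x (hts x.2) (r x) (hr x x.2)
    _ = ε * ∑' x : t, μ (closedBall x (r x)) := ENNReal.tsum_mul_left
    _ ≤ ε * (μ s + 1) := by gcongr

end Besicovitch

section NormalizedIncrement

variable {E F : Type*} [NormedAddCommGroup E] [NormedAddCommGroup F] [NormedSpace ℝ F]

noncomputable def normalizedIncrement (f : E → F) (x y : E) : F := ‖y - x‖⁻¹ • (f y - f x)

def IncrementLimitsIn (Z : Set E) (f : E → F) (x : E) (T : Set F) : Prop :=
  ∀ x_j : ℕ → E, (∀ j, x_j j ∈ Z) → (∀ j, x_j j ≠ x) → Tendsto x_j atTop (𝓝 x) →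
    ∀ v : F, Tendsto (fun j => normalizedIncrement f x (x_j j)) atTop (𝓝 v) → v ∈ T

def IsCriticalPoint (Z : Set E) (f : E → F) (x : E) : Prop :=
  ∃ T : Submodule ℝ F, T ≠ ⊤ ∧ IncrementLimitsIn Z f x T

variable {Z : Set E} {f : E → F} {L : ℝ≥0} {x y : E}

@[simp]
theorem normalizedIncrement_self (f : E → F) (x : E) : normalizedIncrement f x x = 0 := by
  simp [normalizedIncrement]

theorem norm_sub_smul_normalizedIncrement (f : E → F) (x y : E) :
    ‖y - x‖ • normalizedIncrement f x y = f y - f x := by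
  rcases eq_or_ne y x with rfl | hyx
  · simp
  · exact smul_inv_smul₀ (norm_ne_zero_iff.2 (sub_ne_zero.2 hyx)) _

theorem LipschitzOnWith.norm_normalizedIncrement_le (hf : LipschitzOnWith L f Z) (hx : x ∈ Z)
    (hy : y ∈ Z) : ‖normalizedIncrement f x y‖ ≤ L := by
  rcases eq_or_ne y x with rfl | hyx
  · simp
  rw [normalizedIncrement, norm_smul, norm_inv, norm_norm,
    inv_mul_le_iff₀ (norm_pos_iff.2 (sub_ne_zero.2 hyx))]
  exact (hf.norm_sub_le hy hx).trans_eq (mul_comm _ _)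

theorem eventually_normalizedIncrement_mem_thickening [FiniteDimensional ℝ F]
    (hf : LipschitzOnWith L f Z) (hx : x ∈ Z) {T : Submodule ℝ F}
    (hT : IncrementLimitsIn Z f x T) {ε : ℝ} (hε : 0 < ε) :
    ∀ᶠ y in 𝓝[Z] x, normalizedIncrement f x y ∈ thickening ε ((T : Set F) ∩ closedBall 0 L) := by
  set K := (T : Set F) ∩ closedBall 0 L
  have hK0 : (0 : F) ∈ thickening ε K :=
    self_subset_thickening hε K ⟨T.zero_mem, mem_closedBall_self L.2⟩
  by_contra hfreq
  obtain ⟨y, hy, hbad⟩ := exists_seq_forall_of_frequently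
    ((not_eventually.1 hfreq).and_eventually self_mem_nhdsWithin)
  have hyx : ∀ j, y j ≠ x := fun j hj => (hbad j).1 (by simpa [hj] using hK0)
  obtain ⟨v, hvL, φ, hφ, hlim⟩ := (isCompact_closedBall (0 : F) L).tendsto_subseq
    fun j => mem_closedBall_zero_iff.2 (hf.norm_normalizedIncrement_le hx (hbad j).2)
  have hvT : v ∈ T := hT (y ∘ φ) (fun j => (hbad _).2) (fun j => hyx _)
    ((tendsto_nhdsWithin_iff.1 hy).1.comp hφ.tendsto_atTop) v hlim
  obtain ⟨j, hj⟩ := (hlim.eventually (isOpen_thickening.mem_nhds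
    (self_subset_thickening hε K ⟨hvT, hvL⟩))).exists
  exact (hbad (φ j)).1 hj

end NormalizedIncrement

section Critical

variable {E : Type*} [NormedAddCommGroup E] [NormedSpace ℝ E] [FiniteDimensional ℝ E]
  [MeasurableSpace E] [BorelSpace E] (μ : Measure E) [μ.IsAddHaarMeasure]
  {Z : Set E} {f : E → E} {L : ℝ≥0} {x : E}

theorem IsCriticalPoint.exists_measure_image_closedBall_le (hf : LipschitzOnWith L f Z)
    (hx : x ∈ Z) (hcrit : IsCriticalPoint Z f x) {ε : ℝ≥0∞} (hε : 0 < ε) :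
    ∃ δ > 0, ∀ r ∈ Ioo 0 δ, μ (f '' (Z ∩ closedBall x r)) ≤ ε * μ (closedBall x r) := by
  obtain ⟨T, hT, hlim⟩ := hcrit
  set K := (T : Set E) ∩ closedBall 0 L
  have hK : IsCompact K := (isCompact_closedBall 0 _).inter_left T.closed_of_finiteDimensional
  have hK0 : μ K = 0 := measure_mono_null inter_subset_left (Measure.addHaar_submodule μ T hT)
  obtain ⟨s, hsK, hs⟩ : ∃ s, μ (thickening s K) < ε * μ (ball 0 1) ∧ 0 < s := by
    have hlim := tendsto_measure_thickening_of_isClosed (μ := μ)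
      ⟨1, one_pos, hK.isBounded.thickening.measure_lt_top.ne⟩ hK.isClosed
    rw [hK0] at hlim
    exact ((hlim.eventually (gt_mem_nhds (ENNReal.mul_pos hε.ne'
      (measure_ball_pos μ 0 one_pos).ne'))).and self_mem_nhdsWithin).exists
  have hbal : Balanced ℝ (thickening s K) :=
    (T.balanced.inter balanced_closedBall_zero).thickening s
  obtain ⟨δ, hδ, hnear⟩ := Metric.eventually_nhds_iff.1
    (eventually_nhdsWithin_iff.1 (eventually_normalizedIncrement_mem_thickening hf hx hlim hs))
  refine ⟨δ, hδ, fun r hr => ?_⟩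
  have himage : f '' (Z ∩ closedBall x r) ⊆ f x +ᵥ r • thickening s K := by
    rintro - ⟨y, ⟨hyZ, hyr⟩, rfl⟩
    refine ⟨f y - f x, ?_, add_sub_cancel _ _⟩
    rw [← norm_sub_smul_normalizedIncrement]
    refine hbal.smul_mono ?_ (smul_mem_smul_set (hnear ?_ hyZ))
    · simpa [abs_of_pos hr.1] using mem_closedBall_iff_norm.1 hyr
    · exact (mem_closedBall.1 hyr).trans_lt hr.2
  calc μ (f '' (Z ∩ closedBall x r)) ≤ μ (f x +ᵥ r • thickening s K) := measure_mono himage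
    _ = ENNReal.ofReal (r ^ finrank ℝ E) * μ (thickening s K) := by
        rw [measure_vadd, Measure.addHaar_smul, abs_of_nonneg (pow_nonneg hr.1.le _)]
    _ ≤ ENNReal.ofReal (r ^ finrank ℝ E) * (ε * μ (ball 0 1)) := by gcongr
    _ = ε * μ (closedBall x r) := by
        rw [Measure.addHaar_closedBall μ x hr.1.le]
        ring

theorem addHaar_image_setOf_isCriticalPoint_eq_zero (hf : LipschitzOnWith L f Z) :
    μ (f '' {x ∈ Z | IsCriticalPoint Z f x}) = 0 := by
  set C := {x ∈ Z | IsCriticalPoint Z f x}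
  rw [← iUnion_inter_closedBall_nat C 0, image_iUnion]
  refine measure_iUnion_null fun k =>
    eq_zero_of_forall_pos_le_mul (c := μ (C ∩ closedBall 0 k) + 1) ?_ fun ε hε => ?_
  · exact ENNReal.add_ne_top.2
      ⟨((measure_mono inter_subset_right).trans_lt measure_closedBall_lt_top).ne, ENNReal.one_ne_top⟩
  refine measure_image_le_mul_of_forall_closedBall μ μ f fun y ⟨⟨hyZ, hcrit⟩, _⟩ => ?_
  obtain ⟨δ, hδ, hball⟩ := hcrit.exists_measure_image_closedBall_le μ hf hyZ hε
  exact ⟨δ, hδ, fun r hr => (measure_mono (image_mono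
    (inter_subset_inter_left _ (inter_subset_left.trans (sep_subset _ _))))).trans (hball r hr)⟩

end Critical

theorem stmt_6_general (n : ℕ) (Z : Set (EuclideanSpace ℝ (Fin n)))
    (f : EuclideanSpace ℝ (Fin n) → EuclideanSpace ℝ (Fin n))
    (L : NNReal) (hf : LipschitzOnWith L f Z) :
    μH[(n : ℝ)] (f '' {x ∈ Z |
      ∃ T : Submodule ℝ (EuclideanSpace ℝ (Fin n)), T ≠ ⊤ ∧
        ∀ x_j : ℕ → EuclideanSpace ℝ (Fin n),
          (∀ j, x_j j ∈ Z) → (∀ j, x_j j ≠ x) →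
          Tendsto x_j atTop (nhds x) →
          ∀ v : EuclideanSpace ℝ (Fin n),
            Tendsto (fun j => (‖x_j j - x‖)⁻¹ • (f (x_j j) - f x)) atTop (nhds v) →
            v ∈ T}) = 0 := by
  have : (μH[(n : ℝ)] : Measure (EuclideanSpace ℝ (Fin n))).IsAddHaarMeasure := by
    simpa using isAddHaarMeasure_hausdorffMeasure (E := EuclideanSpace ℝ (Fin n))
  exact addHaar_image_setOf_isCriticalPoint_eq_zero _ hf

theorem stmt_6 (n : ℕ) (Z : Set (EuclideanSpace ℝ (Fin n))) (hZ : IsCompact Z)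
    (f : EuclideanSpace ℝ (Fin n) → EuclideanSpace ℝ (Fin n))
    (L : NNReal) (hf : LipschitzOnWith L f Z) :
    μH[(n : ℝ)] (f '' {x ∈ Z |
      ∃ T : Submodule ℝ (EuclideanSpace ℝ (Fin n)), T ≠ ⊤ ∧
        ∀ x_j : ℕ → EuclideanSpace ℝ (Fin n),
          (∀ j, x_j j ∈ Z) → (∀ j, x_j j ≠ x) →
          Tendsto x_j atTop (nhds x) →
          ∀ v : EuclideanSpace ℝ (Fin n),
            Tendsto (fun j => (‖x_j j - x‖)⁻¹ • (f (x_j j) - f x)) atTop (nhds v) →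
            v ∈ T}) = 0 :=
  stmt_6_general n Z f L hf
end

section
/- For every σ > 0 there exists K₁ > 2 such that for all real α, β with β ≤ −σ, α ≥ σ, and α + β ≥ σ, and all K ≥ K₁, one has ((K^{α+β} − 1)³/(α+β))² < ((K^{2α} − 1)³/(2α)) · ((K^{2β} − 1)³/(2β)). -/
/-!
Write `T = K^(α+β)`, `A = K^(2α)` and `B = K^(2β)`, so that `T² = A B`, `A` is large and `B` is
small. Then `(A - 1)³ (1 - B)³ ≥ A³ / 64`, while `(T - 1)⁶ < T⁶ = A³ B³`, so the inequality reduces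
to `256 α |β| B³ ≤ (α + β)²`. Since `B³ = K^(-6|β|)` decays exponentially in `|β| log K`, this holds
as soon as `(α + β) log K` is large, which `α + β ≥ σ` guarantees for `K ≥ exp (64 / σ)`.
-/

open Real

lemma sq_cube_div_lt_of_sq_eq_mul {T A B α β : ℝ} (hα : 0 < α) (hβ : β < 0) (hs : 0 < α + β)
    (hT : 1 < T) (hA : 2 ≤ A) (hB : B ≤ 1 / 2) (hTAB : T ^ 2 = A * B)
    (hkey : 256 * α * -β * B ^ 3 ≤ (α + β) ^ 2) :
    ((T - 1) ^ 3 / (α + β)) ^ 2 < (A - 1) ^ 3 / (2 * α) * ((B - 1) ^ 3 / (2 * β)) := by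
  have hαβ : 0 < α * -β := mul_pos hα (neg_pos.mpr hβ)
  have hA3 : (A / 2) ^ 3 ≤ (A - 1) ^ 3 := pow_le_pow_left₀ (by linarith) (by linarith) 3
  have hB3 : (1 / 2 : ℝ) ^ 3 ≤ (1 - B) ^ 3 := pow_le_pow_left₀ (by norm_num) (by linarith) 3
  calc ((T - 1) ^ 3 / (α + β)) ^ 2
      = (T - 1) ^ 6 / (α + β) ^ 2 := by rw [div_pow, ← pow_mul]
    _ < (T ^ 2) ^ 3 / (α + β) ^ 2 := by
        rw [← pow_mul]
        gcongr
        linarith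
    _ = A ^ 3 * (B ^ 3 / (α + β) ^ 2) := by rw [hTAB]; ring
    _ ≤ A ^ 3 * (1 / (256 * (α * -β))) := by
        refine mul_le_mul_of_nonneg_left ?_ (by positivity)
        rw [div_le_div_iff₀ (by positivity) (by positivity)]
        linarith
    _ = (A / 2) ^ 3 * (1 / 2) ^ 3 / (4 * (α * -β)) := by ring
    _ ≤ (A - 1) ^ 3 * (1 - B) ^ 3 / (4 * (α * -β)) := by
        refine div_le_div_of_nonneg_right ?_ (by positivity)
        exact mul_le_mul hA3 hB3 (by norm_num) (pow_nonneg (by linarith) 3)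
    _ = (A - 1) ^ 3 / (2 * α) * ((B - 1) ^ 3 / (2 * β)) := by
        field_simp
        ring

lemma add_one_le_rpow {K : ℝ} (hK : 0 < K) (x : ℝ) : x * log K + 1 ≤ K ^ x := by
  rw [rpow_def_of_pos hK, mul_comm (log K)]
  exact add_one_le_exp _

lemma quadratic_le_rpow {K x : ℝ} (hK : 1 ≤ K) (hx : 0 ≤ x) :
    1 + x * log K + (x * log K) ^ 2 / 2 ≤ K ^ x := by
  rw [rpow_def_of_pos (by linarith), mul_comm (log K)]
  exact quadratic_le_exp_of_nonneg (mul_nonneg hx (log_nonneg hK))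

lemma rpow_le_one_half {K x : ℝ} (hK : 0 < K) (hx : 1 ≤ -x * log K) : K ^ x ≤ 1 / 2 := by
  have h2 : 2 ≤ K ^ (-x) := by linarith [add_one_le_rpow hK (-x)]
  rw [← neg_neg x, rpow_neg hK.le, one_div]
  exact inv_anti₀ two_pos h2

lemma mul_rpow_le_sq {K α β : ℝ} (hK : 1 ≤ K) (hβ : β < 0) (hs : 0 < α + β)
    (hsK : 64 ≤ (α + β) * log K) : 256 * α * -β * K ^ (6 * β) ≤ (α + β) ^ 2 := by
  set s := α + β
  set b := -β
  set L := log K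
  have hb : 0 < b := neg_pos.mpr hβ
  have hexp : 1 + 6 * b * L + (6 * b * L) ^ 2 / 2 ≤ K ^ (6 * b) :=
    quadratic_le_rpow hK (by positivity)
  have hK6 : K ^ (6 * β) * K ^ (6 * b) = 1 := by
    rw [← rpow_add (by linarith)]
    simp [b]
  have hsL : 0 ≤ s * L - 64 := by linarith
  -- Split `α b = s b + b²`: the linear term of the exponential absorbs `s b`, the quadratic one `b²`.
  have hlin : 256 * (s * b) ≤ s ^ 2 * (6 * b * L) := by
    nlinarith [mul_nonneg (mul_pos hs hb).le hsL]
  have hquad : 256 * b ^ 2 ≤ s ^ 2 * ((6 * b * L) ^ 2 / 2) := by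
    nlinarith [mul_nonneg (sq_nonneg b) (mul_nonneg hsL (by linarith : 0 ≤ s * L + 64))]
  have hpoly : 256 * α * b ≤ s ^ 2 * (1 + 6 * b * L + (6 * b * L) ^ 2 / 2) := by
    have hα : α = s + b := by ring
    rw [hα]
    linarith [sq_nonneg s]
  have hKpos : 0 < K ^ (6 * b) := rpow_pos_of_pos (by linarith) _
  calc 256 * α * b * K ^ (6 * β)
      = 256 * α * b / K ^ (6 * b) := by
        rw [eq_div_iff hKpos.ne', mul_assoc, hK6, mul_one]
    _ ≤ s ^ 2 := by
        rw [div_le_iff₀ hKpos]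
        exact hpoly.trans (by gcongr)

theorem stmt_14 (σ : ℝ) (hσ : 0 < σ) :
    ∃ K₁ : ℝ, 2 < K₁ ∧
      ∀ α β : ℝ, β ≤ -σ → σ ≤ α → σ ≤ α + β →
        ∀ K : ℝ, K₁ ≤ K →
          ((K ^ (α + β) - 1) ^ 3 / (α + β)) ^ 2 <
            ((K ^ (2 * α) - 1) ^ 3 / (2 * α)) * ((K ^ (2 * β) - 1) ^ 3 / (2 * β)) := by
  refine ⟨exp (64 / σ) + 2, by linarith [exp_pos (64 / σ)], ?_⟩
  intro α β hβ hα hs K hK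
  have hK₁ : 1 < K := by linarith [exp_pos (64 / σ)]
  have hK₀ : 0 < K := by linarith
  have hσK : 64 ≤ σ * log K := by
    rw [← div_le_iff₀' hσ, le_log_iff_exp_le hK₀]
    linarith
  have hlog : 0 ≤ log K := log_nonneg hK₁.le
  have hsK : 64 ≤ (α + β) * log K := hσK.trans (by gcongr)
  have hαK : 64 ≤ α * log K := hσK.trans (by gcongr)
  have hβK : 64 ≤ -β * log K := hσK.trans (by gcongr; linarith)
  refine sq_cube_div_lt_of_sq_eq_mul (by linarith) (by linarith) (by linarith)
    (one_lt_rpow hK₁ (by linarith)) (by linarith [add_one_le_rpow hK₀ (2 * α)])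
    (rpow_le_one_half hK₀ (by linarith)) ?_ ?_
  · rw [← rpow_mul_natCast hK₀.le, ← rpow_add hK₀]
    ring_nf
  · rw [← rpow_mul_natCast hK₀.le, show 2 * β * ((3 : ℕ) : ℝ) = 6 * β by push_cast; ring]
    exact mul_rpow_le_sq hK₁.le (by linarith) (by linarith) hsK
end
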